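/- Soundness of axiom G: if E ⊑ ∂(F) then E + F ≈_b F, and hence α.(∂(E+F) ⊕_r Q) ≈_rb α.(∂(F) ⊕_r Q). -/

import Mathlib

open scoped BigOperators
open Classical

namespace PBB

structure Distr (X : Type) where
  f : X → ℝ
  nonneg : ∀ x, 0 ≤ f x
  fin : (Function.support f).Finite
  sum_one : ∑ᶠ x, f x = 1

namespace Distr

variable {X : Type}

noncomputable def dirac (E : X) : Distr X where
  f := fun x => if x = E then 1 else 0
  nonneg := fun x => by by_cases h : x = E <;> simp [h]
  fin := Set.Finite.subset (Set.finite_singleton E) (by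
    intro x hx
    simp only [Function.mem_support] at hx
    by_contra h
    simp only [Set.mem_singleton_iff] at h
    simp [h] at hx)
  sum_one := by
    rw [finsum_eq_single _ E (by intro x hx; simp [hx])]
    simp

noncomputable def mix (r : ℝ) (h0 : 0 ≤ r) (h1 : r ≤ 1) (μ ν : Distr X) : Distr X where
  f := fun x => r * μ.f x + (1 - r) * ν.f x
  nonneg := fun x =>
    add_nonneg (mul_nonneg h0 (μ.nonneg x)) (mul_nonneg (by linarith) (ν.nonneg x))
  fin := Set.Finite.subset (μ.fin.union ν.fin) (by
    intro x hx
    simp only [Function.mem_support] at hx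
    by_contra h
    simp only [Set.mem_union, Function.mem_support, not_or, not_not] at h
    simp [h.1, h.2] at hx)
  sum_one := by
    have hf : (Function.support fun x => r * μ.f x).Finite :=
      Set.Finite.subset μ.fin (by
        intro x hx
        simp only [Function.mem_support] at hx ⊢
        intro h; simp [h] at hx)
    have hg : (Function.support fun x => (1 - r) * ν.f x).Finite :=
      Set.Finite.subset ν.fin (by
        intro x hx
        simp only [Function.mem_support] at hx ⊢
        intro h; simp [h] at hx)
    rw [finsum_add_distrib hf hg, ← mul_finsum _ _, ← mul_finsum _ _,
      μ.sum_one, ν.sum_one]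
    ring

end Distr

def IsMix {X : Type} (r : ℝ) (μ ν ξ : Distr X) : Prop :=
  ∀ x, ξ.f x = r * μ.f x + (1 - r) * ν.f x

def IsCombo {X I : Type} [Fintype I] (p : I → ℝ) (μs : I → Distr X) (ξ : Distr X) : Prop :=
  (∀ i, 0 ≤ p i) ∧ (∑ i, p i = 1) ∧ ∀ x, ξ.f x = ∑ i, p i * (μs i).f x

/-! ### The probabilistic process calculus -/

mutual
/-- Non-deterministic processes: `E ::= 0 | α.P | E + E`. -/
inductive PE (Act : Type) : Type where
  | zero : PE Act
  | pre : Act → PP Act → PE Act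
  | plus : PE Act → PE Act → PE Act

/-- Probabilistic processes: `P ::= ∂(E) | P ⊕_r P` with `r ∈ (0,1)`. -/
inductive PP (Act : Type) : Type where
  | dirac : PE Act → PP Act
  | pchoice : PP Act → (r : ℝ) → 0 < r → r < 1 → PP Act → PP Act
end

variable {Act : Type}

/-- The distribution `⟦P⟧` denoted by a probabilistic process. -/
noncomputable def den : PP Act → Distr (PE Act)
  | .dirac E => Distr.dirac E
  | .pchoice P r h0 h1 Q => Distr.mix r h0.le h1.le (den P) (den Q)

/-- The transition relation `E →α μ` on non-deterministic processes. -/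
inductive pstep : PE Act → Act → Distr (PE Act) → Prop where
  | pre (α : Act) (P : PP Act) : pstep (.pre α P) α (den P)
  | left {E₁ E₂ : PE Act} {α : Act} {μ : Distr (PE Act)} :
      pstep E₁ α μ → pstep (.plus E₁ E₂) α μ
  | right {E₁ E₂ : PE Act} {α : Act} {μ : Distr (PE Act)} :
      pstep E₂ α μ → pstep (.plus E₁ E₂) α μ

/-- The (combined) transition relation `μ →α μ'` on distributions. -/
def dstep (μ : Distr (PE Act)) (α : Act) (μ' : Distr (PE Act)) : Prop :=
  ∃ (I : Type) (_ : Fintype I) (p : I → ℝ) (Es : I → PE Act) (μs : I → Distr (PE Act)),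
    IsCombo p (fun i => Distr.dirac (Es i)) μ ∧ IsCombo p μs μ' ∧
    ∀ i, pstep (Es i) α (μs i)

variable (τ : Act)

/-- The partial silent step `μ →(τ) μ'`. -/
def ptau (μ μ' : Distr (PE Act)) : Prop :=
  dstep μ τ μ' ∨
  ∃ (s : ℝ) (μ₁ μ₂ μ₁' : Distr (PE Act)), 0 ≤ s ∧ s ≤ 1 ∧
    IsMix s μ₁ μ₂ μ ∧ IsMix s μ₁' μ₂ μ' ∧ dstep μ₁ τ μ₁'

/-- `μ ⟹ μ'`: the reflexive-transitive closure of `→(τ)`. -/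
def wtau : Distr (PE Act) → Distr (PE Act) → Prop :=
  Relation.ReflTransGen (ptau τ)

/-- The optional step `μ →(α) μ'`. -/
def optStep (μ : Distr (PE Act)) (α : Act) (μ' : Distr (PE Act)) : Prop :=
  dstep μ α μ' ∨ (α = τ ∧ ptau τ μ μ')

/-- Weak decomposability of a relation on distributions. -/
def WeaklyDecomposable (R : Distr (PE Act) → Distr (PE Act) → Prop) : Prop :=
  ∀ (I : Type) (_ : Fintype I) (p : I → ℝ) (μs : I → Distr (PE Act))
    (μ ν : Distr (PE Act)),
    R μ ν → IsCombo p μs μ →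
    ∃ (ν' : Distr (PE Act)) (νs : I → Distr (PE Act)),
      wtau τ ν ν' ∧ R μ ν' ∧ IsCombo p νs ν' ∧ ∀ i, R (μs i) (νs i)

/-- Decomposability of a relation on distributions. -/
def Decomposable (R : Distr (PE Act) → Distr (PE Act) → Prop) : Prop :=
  ∀ (I : Type) (_ : Fintype I) (p : I → ℝ) (μs : I → Distr (PE Act))
    (μ ν : Distr (PE Act)),
    R μ ν → IsCombo p μs μ →
    ∃ νs : I → Distr (PE Act), IsCombo p νs ν ∧ ∀ i, R (μs i) (νs i)

/-- Branching probabilistic bisimulation relations. -/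
def IsBranchingBisim (R : Distr (PE Act) → Distr (PE Act) → Prop) : Prop :=
  Symmetric R ∧ WeaklyDecomposable τ R ∧
  ∀ μ ν α μ', R μ ν → dstep μ α μ' →
    ∃ ν' ν'', wtau τ ν ν' ∧ optStep τ ν' α ν'' ∧ R μ ν' ∧ R μ' ν''

/-- Branching probabilistic bisimilarity `≈_b`. -/
def bb (μ ν : Distr (PE Act)) : Prop :=
  ∃ R, IsBranchingBisim τ R ∧ R μ ν

/-- Strong probabilistic bisimulation relations. -/
def IsStrongBisim (R : Distr (PE Act) → Distr (PE Act) → Prop) : Prop :=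
  Symmetric R ∧ Decomposable R ∧
  ∀ μ ν α μ', R μ ν → dstep μ α μ' →
    ∃ ν', dstep ν α ν' ∧ R μ' ν'

/-- Strong probabilistic bisimilarity `∼`. -/
def sb (μ ν : Distr (PE Act)) : Prop :=
  ∃ R, IsStrongBisim R ∧ R μ ν

/-- Rooted branching probabilistic bisimulation relations. -/
def IsRootedBranchingBisim (R : Distr (PE Act) → Distr (PE Act) → Prop) : Prop :=
  Symmetric R ∧ Decomposable R ∧
  ∀ μ ν α μ', R μ ν → dstep μ α μ' →
    ∃ ν', dstep ν α ν' ∧ bb τ μ' ν'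

/-- Rooted branching probabilistic bisimilarity `≈_rb`. -/
def rbb (μ ν : Distr (PE Act)) : Prop :=
  ∃ R, IsRootedBranchingBisim τ R ∧ R μ ν

/-- `≈_b`-stability of a distribution. -/
def Stable (μ : Distr (PE Act)) : Prop :=
  ∀ μ', wtau τ μ μ' → bb τ μ μ' → μ' = μ

/-- A state is rigid iff it admits no inert `τ`-transition. -/
def Rigid (E : PE Act) : Prop :=
  ¬ ∃ μ, pstep E τ μ ∧ bb τ (Distr.dirac E) μ

/-- `E ⊑ P`: every transition of `E` is matched by an optional transition of `⟦P⟧`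
with branching probabilistically bisimilar target. -/
def sq (E : PE Act) (P : PP Act) : Prop :=
  ∀ α μ, pstep E α μ → ∃ ν, optStep τ (den P) α ν ∧ bb τ μ ν

/-!
Write `a = E + F` and `b = F`. Each of `a`, `b` is matched by the other in the sense of `⊑`: a
step of `E + F` is a step of `E`, matched by `∂(F)` by hypothesis, or a step of `F`; and every
step of `F` is a step of `E + F`. Under these two conditions the convex closure of
`≈_b ∪ {(δ(a), δ(b)), (δ(b), δ(a))}` is a branching probabilistic bisimulation. Its weak
decomposability comes from a common refinement (a coupling) of two convex decompositions of the
same distribution; its transfer property from the fact that a transition of a convex combination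
splits into transitions of the components. The same relation contains the pair
`(⟦∂(E+F) ⊕_r Q⟧, ⟦∂(F) ⊕_r Q⟧)`, and since the only transition of `α.P` is `α.P →α ⟦P⟧`,
this gives the rooted statement.
-/

namespace Distr

variable {X : Type}

theorem ext {μ ν : Distr X} (h : ∀ x, μ.f x = ν.f x) : μ = ν := by
  obtain ⟨f, _, _, _⟩ := μ
  obtain ⟨g, _, _, _⟩ := ν
  obtain rfl : f = g := funext h
  rfl

theorem sum_eq_one (μ : Distr X) {s : Finset X} (hs : Function.support μ.f ⊆ s) :
    ∑ x ∈ s, μ.f x = 1 := by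
  rw [← finsum_eq_finsetSum_of_support_subset _ hs, μ.sum_one]

theorem apply_le_one (μ : Distr X) (x : X) : μ.f x ≤ 1 :=
  calc μ.f x ≤ ∑ y ∈ insert x μ.fin.toFinset, μ.f y :=
        Finset.single_le_sum (fun y _ => μ.nonneg y) (Finset.mem_insert_self x _)
    _ = 1 := μ.sum_eq_one fun y hy => by simp [hy]

theorem eq_dirac_of_apply_eq_one {μ : Distr X} {a : X} (ha : μ.f a = 1) : μ = dirac a := by
  refine ext fun x => ?_
  by_cases hx : x = a
  · simp [dirac, hx, ha]
  · have hle : μ.f x + μ.f a ≤ 1 := by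
      rw [← Finset.sum_pair hx, ← μ.sum_eq_one (s := {x, a} ∪ μ.fin.toFinset)
        fun y hy => by simp [hy]]
      exact Finset.sum_le_sum_of_subset_of_nonneg Finset.subset_union_left
        fun y _ _ => μ.nonneg y
    simp only [dirac, if_neg hx]
    linarith [μ.nonneg x]

theorem dirac_injective : Function.Injective (dirac : X → Distr X) := by
  intro a b hab
  have h := congrArg (fun μ => μ.f a) hab
  by_contra hne
  simp [dirac, hne] at h

theorem exists_mul_apply_eq [Nonempty X] (s : Finset X) (g : X → ℝ) (hg : ∀ x, 0 ≤ g x)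
    (hs : ∀ x ∉ s, g x = 0) : ∃ ζ : Distr X, ∀ x, (∑ y ∈ s, g y) * ζ.f x = g x := by
  by_cases hc : ∑ y ∈ s, g y = 0
  · refine ⟨dirac (Classical.arbitrary X), fun x => ?_⟩
    rw [hc, zero_mul]
    by_cases hx : x ∈ s
    · exact ((Finset.sum_eq_zero_iff_of_nonneg fun y _ => hg y).1 hc x hx).symm
    · exact (hs x hx).symm
  · have hsupp : Function.support (fun x => g x / ∑ y ∈ s, g y) ⊆ s := fun x hx => by
      by_contra hxs
      exact hx (by simp [hs x hxs])
    refine ⟨⟨fun x => g x / ∑ y ∈ s, g y,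
      fun x => div_nonneg (hg x) (Finset.sum_nonneg fun y _ => hg y),
      s.finite_toSet.subset hsupp, ?_⟩, fun x => mul_div_cancel₀ _ hc⟩
    rw [finsum_eq_finsetSum_of_support_subset _ hsupp, ← Finset.sum_div, div_self hc]

end Distr

section IsCombo

variable {X I J : Type} [Fintype I] [Fintype J] {p : I → ℝ} {μs νs : I → Distr X}
  {μ ν : Distr X}

theorem IsCombo.apply (h : IsCombo p μs μ) (x : X) : μ.f x = ∑ i, p i * (μs i).f x :=
  h.2.2 x

theorem IsCombo.unique (h : IsCombo p μs μ) (h' : IsCombo p μs ν) : μ = ν :=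
  Distr.ext fun x => by rw [h.apply, h'.apply]

theorem IsCombo.congr (h : IsCombo p μs μ) (hμs : ∀ i, p i ≠ 0 → μs i = νs i) :
    IsCombo p νs μ := by
  refine ⟨h.1, h.2.1, fun x => ?_⟩
  rw [h.apply]
  refine Finset.sum_congr rfl fun i _ => ?_
  by_cases hi : p i = 0
  · simp [hi]
  · rw [hμs i hi]

theorem isCombo_const (hp0 : ∀ i, 0 ≤ p i) (hp1 : ∑ i, p i = 1) (μ : Distr X) :
    IsCombo p (fun _ => μ) μ :=
  ⟨hp0, hp1, fun x => by rw [← Finset.sum_mul, hp1, one_mul]⟩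

theorem IsCombo.eq_of_const (h : IsCombo p (fun _ => ν) μ) : μ = ν :=
  h.unique (isCombo_const h.1 h.2.1 ν)

theorem IsCombo.mul_apply_eq_zero (h : IsCombo p μs μ) (i : I) {x : X} (hx : μ.f x = 0) :
    p i * (μs i).f x = 0 := by
  rw [h.apply] at hx
  exact (Finset.sum_eq_zero_iff_of_nonneg fun k _ => mul_nonneg (h.1 k) ((μs k).nonneg x)).1
    hx i (Finset.mem_univ i)

theorem IsCombo.sum_mul_apply (h : IsCombo p μs μ) {s : Finset X}
    (hs : Function.support μ.f ⊆ s) (i : I) : ∑ x ∈ s, p i * (μs i).f x = p i := by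
  by_cases hi : p i = 0
  · simp [hi]
  · rw [← Finset.mul_sum, (μs i).sum_eq_one fun x hx => hs fun hμ =>
      hx ((mul_eq_zero.1 (h.mul_apply_eq_zero i hμ)).resolve_left hi), mul_one]

theorem IsCombo.sum_mul_div (h : IsCombo p μs μ) {a : ℝ} {x : X} (ha : μ.f x = 0 → a = 0) :
    ∑ i, a * (p i * (μs i).f x) / μ.f x = a := by
  by_cases hx : μ.f x = 0
  · simp [hx, ha hx]
  · rw [← Finset.sum_div, ← Finset.mul_sum, ← h.apply, mul_div_cancel_right₀ _ hx]

theorem IsCombo.of_mul_eq {w : J → ℝ} {c : ℝ} {ds : J → Distr X} (hw : ∀ j, 0 ≤ w j)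
    (hc : ∑ j, w j = c) (hc0 : c ≠ 0) (h : ∀ x, c * μ.f x = ∑ j, w j * (ds j).f x) :
    IsCombo (fun j => w j / c) ds μ := by
  have hcpos : 0 < c := lt_of_le_of_ne (hc ▸ Finset.sum_nonneg fun j _ => hw j) (Ne.symm hc0)
  refine ⟨fun j => div_nonneg (hw j) hcpos.le, by rw [← Finset.sum_div, hc, div_self hc0],
    fun x => ?_⟩
  rw [← mul_right_inj' hc0, h x, Finset.mul_sum]
  exact Finset.sum_congr rfl fun j _ => by field_simp

theorem IsCombo.mul_apply {w : J → ℝ} {c : ℝ} {ds : J → Distr X} (hw : ∀ j, 0 ≤ w j)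
    (hc : ∑ j, w j = c) (h : c ≠ 0 → IsCombo (fun j => w j / c) ds μ) (x : X) :
    c * μ.f x = ∑ j, w j * (ds j).f x := by
  by_cases hc0 : c = 0
  · have hw0 := (Fintype.sum_eq_zero_iff_of_nonneg hw).1 (hc.trans hc0)
    simp [hc0, hw0]
  · rw [(h hc0).apply, Finset.mul_sum]
    exact Finset.sum_congr rfl fun j _ => by field_simp

theorem exists_isCombo_div [Nonempty X] {w : J → ℝ} {c : ℝ} (hw : ∀ j, 0 ≤ w j)
    (hc : ∑ j, w j = c) (ds : J → Distr X) :
    ∃ μ : Distr X, c ≠ 0 → IsCombo (fun j => w j / c) ds μ := by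
  set s := Finset.univ.biUnion fun j => (ds j).fin.toFinset
  have hds : ∀ j, Function.support (ds j).f ⊆ s := fun j x hx => by
    simpa [s] using ⟨j, hx⟩
  obtain ⟨μ, hμ⟩ := Distr.exists_mul_apply_eq s (fun x => ∑ j, w j * (ds j).f x)
    (fun x => Finset.sum_nonneg fun j _ => mul_nonneg (hw j) ((ds j).nonneg x))
    (fun x hx => Finset.sum_eq_zero fun j _ => by
      rw [Function.notMem_support.1 fun h => hx (hds j h), mul_zero])
  have hsum : ∑ x ∈ s, ∑ j, w j * (ds j).f x = c := by
    rw [Finset.sum_comm, ← hc]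
    exact Finset.sum_congr rfl fun j _ => by
      rw [← Finset.mul_sum, (ds j).sum_eq_one (hds j), mul_one]
  exact ⟨μ, fun hc0 => IsCombo.of_mul_eq hw hc hc0 fun x => hsum ▸ hμ x⟩

theorem exists_isCombo [Nonempty X] (hp0 : ∀ i, 0 ≤ p i) (hp1 : ∑ i, p i = 1)
    (μs : I → Distr X) : ∃ μ, IsCombo p μs μ := by
  obtain ⟨μ, hμ⟩ := exists_isCombo_div hp0 hp1 μs
  exact ⟨μ, by simpa using hμ one_ne_zero⟩

theorem IsCombo.eq_dirac {a : X} (h : IsCombo p μs (Distr.dirac a)) {i : I} (hi : p i ≠ 0) :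
    μs i = Distr.dirac a := by
  refine Distr.eq_dirac_of_apply_eq_one (le_antisymm ((μs i).apply_le_one a) ?_)
  have hdefect : ∑ k, p k * (1 - (μs k).f a) = 0 := by
    simp only [mul_sub, mul_one, Finset.sum_sub_distrib, h.2.1, ← h.apply]
    simp [Distr.dirac]
  have hterms := (Fintype.sum_eq_zero_iff_of_nonneg fun k =>
    mul_nonneg (h.1 k) (sub_nonneg.2 ((μs k).apply_le_one a))).1 hdefect
  linarith [(mul_eq_zero.1 (congrFun hterms i)).resolve_left hi]

theorem IsCombo.eq_of_dirac {Es : I → X} {a : X}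
    (h : IsCombo p (fun i => Distr.dirac (Es i)) (Distr.dirac a)) {i : I} (hi : p i ≠ 0) :
    Es i = a :=
  Distr.dirac_injective (h.eq_dirac hi)

theorem IsCombo.bind {ι : I → Type} [∀ i, Fintype (ι i)] {q : ∀ i, ι i → ℝ}
    {ms : ∀ i, ι i → Distr X} (hp : IsCombo p μs μ) (hq : ∀ i, IsCombo (q i) (ms i) (μs i)) :
    IsCombo (fun ij : Σ i, ι i => p ij.1 * q ij.1 ij.2) (fun ij => ms ij.1 ij.2) μ := by
  refine ⟨fun ij => mul_nonneg (hp.1 ij.1) ((hq ij.1).1 ij.2), ?_, fun x => ?_⟩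
  · simp only [← Finset.univ_sigma_univ, Finset.sum_sigma, ← Finset.mul_sum, (hq _).2.1,
      mul_one, hp.2.1]
  · simp only [← Finset.univ_sigma_univ, Finset.sum_sigma, hp.apply x, (hq _).apply x,
      Finset.mul_sum, mul_assoc]

theorem IsCombo.restrict (h : IsCombo p μs μ) :
    IsCombo (fun i : {i // p i ≠ 0} => p i) (fun i => μs i) μ := by
  have hsum : ∀ g : I → ℝ, ∑ i : {i // p i ≠ 0}, p i * g i = ∑ i, p i * g i := fun g => by
    rw [← Finset.sum_subtype (Finset.univ.filter (p · ≠ 0)) (by simp) (fun i => p i * g i)]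
    exact Finset.sum_filter_of_ne fun i _ h => left_ne_zero_of_mul h
  exact ⟨fun i => h.1 i, by simpa [h.2.1] using hsum 1, fun x => (h.apply x).trans (hsum _).symm⟩

theorem IsMix.isCombo {r : ℝ} {μ₁ μ₂ : Distr X} (h0 : 0 ≤ r) (h1 : r ≤ 1) (h : IsMix r μ₁ μ₂ μ) :
    IsCombo ![r, 1 - r] ![μ₁, μ₂] μ :=
  ⟨fun i => by fin_cases i <;> simp [h0, h1], by simp, fun x => by simp [h x]⟩

theorem IsCombo.exists_coupling [Nonempty X] {q : J → ℝ} {ξs : J → Distr X}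
    (hp : IsCombo p μs μ) (hq : IsCombo q ξs μ) :
    ∃ (w : I → J → ℝ) (ζ : I → J → Distr X), (∀ i j, 0 ≤ w i j) ∧
      (∀ i, ∑ j, w i j = p i) ∧ (∀ j, ∑ i, w i j = q j) ∧
      (∀ i, p i ≠ 0 → IsCombo (fun j => w i j / p i) (ζ i) (μs i)) ∧
      (∀ j, q j ≠ 0 → IsCombo (fun i => w i j / q j) (fun i => ζ i j) (ξs j)) := by
  set S := μ.fin.toFinset
  have hS : Function.support μ.f ⊆ S := fun x hx => by simpa [S] using hx
  -- the part of the mass of `x` shared by the `i`-th and the `j`-th piece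
  set g : I → J → X → ℝ := fun i j x => p i * (μs i).f x * (q j * (ξs j).f x) / μ.f x
  have hg : ∀ i j x, 0 ≤ g i j x := fun i j x =>
    div_nonneg (mul_nonneg (mul_nonneg (hp.1 i) ((μs i).nonneg x))
      (mul_nonneg (hq.1 j) ((ξs j).nonneg x))) (μ.nonneg x)
  have hgS : ∀ i j, ∀ x ∉ S, g i j x = 0 := fun i j x hx => by
    simp [g, Function.notMem_support.1 fun h => hx (hS h)]
  have hrow : ∀ i x, ∑ j, g i j x = p i * (μs i).f x := fun i x =>
    hq.sum_mul_div (hp.mul_apply_eq_zero i)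
  have hcol : ∀ j x, ∑ i, g i j x = q j * (ξs j).f x := fun j x => by
    rw [← hp.sum_mul_div (hq.mul_apply_eq_zero j)]
    exact Finset.sum_congr rfl fun i _ => by simp only [g]; ring
  choose ζ hζ using fun i j => Distr.exists_mul_apply_eq S (g i j) (hg i j) (hgS i j)
  set w : I → J → ℝ := fun i j => ∑ x ∈ S, g i j x
  have hw : ∀ i j, 0 ≤ w i j := fun i j => Finset.sum_nonneg fun x _ => hg i j x
  have hwrow : ∀ i, ∑ j, w i j = p i := fun i => by
    rw [Finset.sum_comm, ← hp.sum_mul_apply hS i]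
    exact Finset.sum_congr rfl fun x _ => hrow i x
  have hwcol : ∀ j, ∑ i, w i j = q j := fun j => by
    rw [Finset.sum_comm, ← hq.sum_mul_apply hS j]
    exact Finset.sum_congr rfl fun x _ => hcol j x
  refine ⟨w, ζ, hw, hwrow, hwcol, fun i hi => .of_mul_eq (hw i) (hwrow i) hi fun x => ?_,
    fun j hj => .of_mul_eq (hw · j) (hwcol j) hj fun x => ?_⟩
  · simp only [w, hζ, hrow]
  · simp only [w, hζ, hcol]

end IsCombo

instance : Nonempty (PE Act) := ⟨.zero⟩

section Steps

variable {τ} {I : Type} [Fintype I] {p : I → ℝ} {α : Act}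

theorem dstep_of_pstep {E : PE Act} {μ : Distr (PE Act)} (h : pstep E α μ) :
    dstep (Distr.dirac E) α μ :=
  ⟨Unit, inferInstance, fun _ => 1, fun _ => E, fun _ => μ,
    isCombo_const (fun _ => zero_le_one) (by simp) _,
    isCombo_const (fun _ => zero_le_one) (by simp) _, fun _ => h⟩

theorem dstep_combo {ρs ρs' : I → Distr (PE Act)} {ρ ρ' : Distr (PE Act)}
    (hρ : IsCombo p ρs ρ) (hρ' : IsCombo p ρs' ρ') (h : ∀ i, p i ≠ 0 → dstep (ρs i) α (ρs' i)) :
    dstep ρ α ρ' := by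
  choose J _ q Es ms hE hms hst using fun i : {i // p i ≠ 0} => h i i.2
  exact ⟨Σ i, J i, inferInstance, fun ij => p ij.1 * q ij.1 ij.2, fun ij => Es ij.1 ij.2,
    fun ij => ms ij.1 ij.2, hρ.restrict.bind hE, hρ'.restrict.bind hms,
    fun ij => hst ij.1 ij.2⟩

theorem IsCombo.exists_dstep {μs : I → Distr (PE Act)} {μ μ' : Distr (PE Act)}
    (hp : IsCombo p μs μ) (hd : dstep μ α μ') :
    ∃ μs' : I → Distr (PE Act), IsCombo p μs' μ' ∧ ∀ i, p i ≠ 0 → dstep (μs i) α (μs' i) := by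
  obtain ⟨J, _, q, Es, ms, hE, hms, hst⟩ := hd
  obtain ⟨w, ζ, hw, hrow, hcol, hrowC, hcolC⟩ := hp.exists_coupling hE
  have hζ : ∀ i j, w i j ≠ 0 → ζ i j = Distr.dirac (Es j) := fun i j hij => by
    have hq : q j ≠ 0 := fun hq =>
      hij (congrFun ((Fintype.sum_eq_zero_iff_of_nonneg (hw · j)).1 ((hcol j).trans hq)) i)
    exact (hcolC j hq).eq_dirac (div_ne_zero hij hq)
  choose μs' hμs' using fun i => exists_isCombo_div (hw i) (hrow i) ms
  refine ⟨μs', ⟨hp.1, hp.2.1, fun x => ?_⟩, fun i hi => ⟨J, inferInstance, _, Es, ms,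
    (hrowC i hi).congr fun j hj => hζ i j (div_ne_zero_iff.1 hj).1, hμs' i hi, hst⟩⟩
  calc μ'.f x = ∑ j, ∑ i, w i j * (ms j).f x := by
        simp only [hms.apply, ← Finset.sum_mul, hcol]
    _ = ∑ i, p i * (μs' i).f x := by
        rw [Finset.sum_comm]
        simp only [IsCombo.mul_apply (hw _) (hrow _) (hμs' _)]

-- A partial step putting weight `0` on the transition `τ.∂(0) →τ ∂(0)`.
theorem ptau_refl (μ : Distr (PE Act)) : ptau τ μ μ :=
  Or.inr ⟨0, Distr.dirac (.pre τ (.dirac .zero)), μ, den (.dirac .zero), le_rfl, zero_le_one,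
    fun x => by simp, fun x => by simp, dstep_of_pstep (pstep.pre τ (.dirac .zero))⟩

theorem ptau.exists_isMix {μ μ' : Distr (PE Act)} (h : ptau τ μ μ') :
    ∃ (s : ℝ) (μ₁ μ₁' μ₂ : Distr (PE Act)), 0 ≤ s ∧ s ≤ 1 ∧ dstep μ₁ τ μ₁' ∧
      IsMix s μ₁ μ₂ μ ∧ IsMix s μ₁' μ₂ μ' := by
  rcases h with hd | ⟨s, μ₁, μ₂, μ₁', hs0, hs1, hm, hm', hd⟩
  · exact ⟨1, μ, μ', μ, zero_le_one, le_rfl, hd, fun x => by ring, fun x => by ring⟩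
  · exact ⟨s, μ₁, μ₁', μ₂, hs0, hs1, hd, hm, hm'⟩

theorem ptau_combo {ρs ρs' : I → Distr (PE Act)} {ρ ρ' : Distr (PE Act)}
    (hρ : IsCombo p ρs ρ) (hρ' : IsCombo p ρs' ρ') (h : ∀ i, ptau τ (ρs i) (ρs' i)) :
    ptau τ ρ ρ' := by
  choose s a a' b hs0 hs1 hd hm hm' using fun i => (h i).exists_isMix
  have hw : ∀ i, 0 ≤ p i * s i := fun i => mul_nonneg (hρ.1 i) (hs0 i)
  have hw' : ∀ i, 0 ≤ p i * (1 - s i) := fun i => mul_nonneg (hρ.1 i) (sub_nonneg.2 (hs1 i))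
  set t := ∑ i, p i * s i with ht
  have ht' : ∑ i, p i * (1 - s i) = 1 - t := by
    simp only [mul_sub, mul_one, Finset.sum_sub_distrib, hρ.2.1, t]
  by_cases ht0 : t = 0
  · have hps : ∀ i, p i * s i = 0 := fun i => by
      simpa using congrFun ((Fintype.sum_eq_zero_iff_of_nonneg hw).1 ht0) i
    have hsplit : ∀ i x, p i * (ρs' i).f x = p i * (ρs i).f x := fun i x => by
      rw [hm i x, hm' i x]
      linear_combination ((a' i).f x - (a i).f x) * hps i
    have : ρ' = ρ := Distr.ext fun x => by simp only [hρ.apply, hρ'.apply, hsplit]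
    rw [this]
    exact ptau_refl ρ
  obtain ⟨A, hA⟩ := exists_isCombo_div hw ht.symm a
  obtain ⟨A', hA'⟩ := exists_isCombo_div hw ht.symm a'
  obtain ⟨B, hB⟩ := exists_isCombo_div hw' ht' b
  have ht1 : t ≤ 1 := hρ.2.1 ▸ Finset.sum_le_sum fun i _ =>
    mul_le_of_le_one_right (hρ.1 i) (hs1 i)
  refine Or.inr ⟨t, A, B, A', Finset.sum_nonneg fun i _ => hw i, ht1, fun x => ?_, fun x => ?_,
    dstep_combo (hA ht0) (hA' ht0) fun i _ => hd i⟩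
  · rw [IsCombo.mul_apply hw ht.symm hA, IsCombo.mul_apply hw' ht' hB, hρ.apply,
      ← Finset.sum_add_distrib]
    exact Finset.sum_congr rfl fun i _ => by rw [hm i x]; ring
  · rw [IsCombo.mul_apply hw ht.symm hA', IsCombo.mul_apply hw' ht' hB, hρ'.apply,
      ← Finset.sum_add_distrib]
    exact Finset.sum_congr rfl fun i _ => by rw [hm' i x]; ring

theorem optStep_combo {ρs ρs' : I → Distr (PE Act)} {ρ ρ' : Distr (PE Act)}
    (hρ : IsCombo p ρs ρ) (hρ' : IsCombo p ρs' ρ')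
    (h : ∀ i, p i ≠ 0 → optStep τ (ρs i) α (ρs' i)) : optStep τ ρ α ρ' := by
  by_cases hα : α = τ
  · subst hα
    refine Or.inr ⟨rfl, ptau_combo hρ.restrict hρ'.restrict fun i => ?_⟩
    rcases h i i.2 with hd | ⟨-, hp⟩
    exacts [Or.inl hd, hp]
  · exact Or.inl (dstep_combo hρ hρ' fun i hi => (h i hi).resolve_right fun h => hα h.1)

theorem wtau_combo_update {νs : I → Distr (PE Act)} {ν ν' a : Distr (PE Act)} {i : I}
    (hν : IsCombo p νs ν) (ha : wtau τ (νs i) a) (hν' : IsCombo p (Function.update νs i a) ν') :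
    wtau τ ν ν' := by
  induction ha generalizing ν' with
  | refl => rw [Function.update_eq_self] at hν'; rw [hν.unique hν']; exact .refl
  | @tail b c _ hbc ih =>
    obtain ⟨νb, hνb⟩ := exists_isCombo hν.1 hν.2.1 (Function.update νs i b)
    refine (ih hνb).tail (ptau_combo hνb hν' fun j => ?_)
    by_cases hj : j = i
    · subst hj; simpa using hbc
    · simpa [hj] using ptau_refl (νs j)

theorem wtau_combo {νs νs' : I → Distr (PE Act)} {ν ν' : Distr (PE Act)}
    (hν : IsCombo p νs ν) (hν' : IsCombo p νs' ν') (h : ∀ i, wtau τ (νs i) (νs' i)) :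
    wtau τ ν ν' := by
  -- the pieces indexed by `s` have already moved, one at a time
  suffices ∀ (s : Finset I) μ, IsCombo p (fun i => if i ∈ s then νs' i else νs i) μ →
      wtau τ ν μ from this Finset.univ ν' (by simpa using hν')
  intro s
  induction s using Finset.induction_on with
  | empty => intro μ hμ; rw [hν.unique (by simpa using hμ)]; exact .refl
  | insert i s hi ih =>
    intro μ hμ
    obtain ⟨μs, hμs⟩ := exists_isCombo hν.1 hν.2.1 fun j => if j ∈ s then νs' j else νs j
    refine (ih μs hμs).trans (wtau_combo_update (i := i) hμs (by simpa [hi] using h i) ?_)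
    convert hμ using 2 with j
    by_cases hj : j = i <;> simp [Function.update, hj]

end Steps

section ConvexLift

variable {X : Type}

def ConvexLift (S : Distr X → Distr X → Prop) (μ ν : Distr X) : Prop :=
  ∃ (I : Type) (_ : Fintype I) (p : I → ℝ) (μs νs : I → Distr X),
    IsCombo p μs μ ∧ IsCombo p νs ν ∧ ∀ i, p i ≠ 0 → S (μs i) (νs i)

variable {S S' : Distr X → Distr X → Prop} {μ ν : Distr X}

theorem ConvexLift.of (h : S μ ν) : ConvexLift S μ ν :=
  ⟨Unit, inferInstance, fun _ => 1, fun _ => μ, fun _ => ν,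
    isCombo_const (fun _ => zero_le_one) (by simp) _,
    isCombo_const (fun _ => zero_le_one) (by simp) _, fun _ _ => h⟩

theorem ConvexLift.symm (hS : ∀ μ ν, S μ ν → S ν μ) (h : ConvexLift S μ ν) : ConvexLift S ν μ :=
  let ⟨I, _, p, μs, νs, hμ, hν, h⟩ := h
  ⟨I, inferInstance, p, νs, μs, hν, hμ, fun i hi => hS _ _ (h i hi)⟩

theorem ConvexLift.mono (hS : ∀ μ ν, S μ ν → S' μ ν) (h : ConvexLift S μ ν) :
    ConvexLift S' μ ν :=
  let ⟨I, _, p, μs, νs, hμ, hν, h⟩ := h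
  ⟨I, inferInstance, p, μs, νs, hμ, hν, fun i hi => hS _ _ (h i hi)⟩

theorem ConvexLift.bind (h : ConvexLift (ConvexLift S) μ ν) : ConvexLift S μ ν := by
  obtain ⟨I, _, p, μs, νs, hμ, hν, h⟩ := h
  choose J _ q ms ns hm hn hS using fun i : {i // p i ≠ 0} => h i i.2
  exact ⟨Σ i, J i, inferInstance, fun ij => p ij.1 * q ij.1 ij.2, fun ij => ms ij.1 ij.2,
    fun ij => ns ij.1 ij.2, hμ.restrict.bind hm, hν.restrict.bind hn,
    fun ij hij => hS ij.1 ij.2 (right_ne_zero_of_mul hij)⟩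

theorem ConvexLift.of_isMix {r : ℝ} {μ₁ μ₂ ν₁ ν₂ : Distr X} (h₁ : S μ₁ ν₁) (h₂ : S μ₂ ν₂)
    (h0 : 0 ≤ r) (h1 : r ≤ 1) (hμ : IsMix r μ₁ μ₂ μ) (hν : IsMix r ν₁ ν₂ ν) :
    ConvexLift S μ ν :=
  ⟨Fin 2, inferInstance, ![r, 1 - r], ![μ₁, μ₂], ![ν₁, ν₂], hμ.isCombo h0 h1,
    hν.isCombo h0 h1, fun i _ => by fin_cases i; exacts [h₁, h₂]⟩

end ConvexLift

section Bisimulation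

variable {τ}

theorem isBranchingBisim_eq : IsBranchingBisim τ (Eq : Distr (PE Act) → Distr (PE Act) → Prop) :=
  ⟨fun _ _ h => h.symm, fun _ _ _ μs μ _ h hc => h ▸ ⟨μ, μs, .refl, rfl, hc, fun _ => rfl⟩,
    fun μ _ _ μ' h hd => h ▸ ⟨μ, μ', .refl, Or.inl hd, rfl, rfl⟩⟩

theorem bb_refl (μ : Distr (PE Act)) : bb τ μ μ :=
  ⟨Eq, isBranchingBisim_eq, rfl⟩

theorem bb_symm {μ ν : Distr (PE Act)} (h : bb τ μ ν) : bb τ ν μ :=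
  let ⟨R, hR, h⟩ := h
  ⟨R, hR, hR.1 h⟩

theorem isBranchingBisim_bb : IsBranchingBisim τ (bb τ) := by
  refine ⟨fun _ _ => bb_symm, ?_, ?_⟩
  · rintro I _ p μs μ ν ⟨R, hR, h⟩ hc
    obtain ⟨ν', νs, h1, h2, h3, h4⟩ := hR.2.1 I _ p μs μ ν h hc
    exact ⟨ν', νs, h1, ⟨R, hR, h2⟩, h3, fun i => ⟨R, hR, h4 i⟩⟩
  · rintro μ ν α μ' ⟨R, hR, h⟩ hd
    obtain ⟨ν', ν'', h1, h2, h3, h4⟩ := hR.2.2 μ ν α μ' h hd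
    exact ⟨ν', ν'', h1, h2, ⟨R, hR, h3⟩, ⟨R, hR, h4⟩⟩

variable {S : Distr (PE Act) → Distr (PE Act) → Prop}

theorem WeaklyDecomposable.convexLift (hrefl : ∀ μ, S μ μ) (hS : WeaklyDecomposable τ S) :
    WeaklyDecomposable τ (ConvexLift S) := by
  rintro J _ q μs μ ν ⟨I, _, p, ms, ns, hm, hn, hmn⟩ hc
  obtain ⟨w, ζ, hw, hrow, hcol, hrowC, hcolC⟩ := hm.exists_coupling hc
  have hwp : ∀ i j, w i j ≠ 0 → p i ≠ 0 := fun i j hij hi =>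
    hij (congrFun ((Fintype.sum_eq_zero_iff_of_nonneg (hw i)).1 ((hrow i).trans hi)) j)
  have hrows : ∀ i, ∃ (n' : Distr (PE Act)) (η : J → Distr (PE Act)), wtau τ (ns i) n' ∧
      (p i ≠ 0 → S (ms i) n' ∧ IsCombo (fun j => w i j / p i) η n' ∧ ∀ j, S (ζ i j) (η j)) := by
    intro i
    by_cases hi : p i = 0
    · exact ⟨ns i, ζ i, .refl, fun h => absurd hi h⟩
    · obtain ⟨n', η, h1, h2, h3, h4⟩ := hS J _ _ (ζ i) (ms i) (ns i) (hmn i hi) (hrowC i hi)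
      exact ⟨n', η, h1, fun _ => ⟨h2, h3, h4⟩⟩
  choose n' η hwt hn' using hrows
  have hcols : ∀ j, ∃ νj : Distr (PE Act),
      (q j ≠ 0 → IsCombo (fun i => w i j / q j) (fun i => η i j) νj) ∧ ConvexLift S (μs j) νj := by
    intro j
    by_cases hj : q j = 0
    -- a piece of weight zero still needs a partner
    · exact ⟨μs j, fun h => absurd hj h, .of (hrefl _)⟩
    · obtain ⟨νj, hνj⟩ := exists_isCombo_div (hw · j) (hcol j) fun i => η i j
      exact ⟨νj, hνj, ⟨I, inferInstance, _, fun i => ζ i j, fun i => η i j, hcolC j hj, hνj hj,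
        fun i hij => (hn' i (hwp i j (div_ne_zero_iff.1 hij).1)).2.2 j⟩⟩
  choose νs hνs hμν using hcols
  obtain ⟨ν', hν'⟩ := exists_isCombo hm.1 hm.2.1 n'
  refine ⟨ν', νs, wtau_combo hn hν' hwt, ⟨I, inferInstance, p, ms, n', hm, hν',
    fun i hi => (hn' i hi).1⟩, ⟨hc.1, hc.2.1, fun x => ?_⟩, hμν⟩
  calc ν'.f x = ∑ i, ∑ j, w i j * (η i j).f x := by
        rw [hν'.apply]
        exact Finset.sum_congr rfl fun i _ =>
          IsCombo.mul_apply (hw i) (hrow i) (fun hi => (hn' i hi).2.1) x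
    _ = ∑ j, q j * (νs j).f x := by
        rw [Finset.sum_comm]
        exact Finset.sum_congr rfl fun j _ =>
          (IsCombo.mul_apply (hw · j) (hcol j) (hνs j) x).symm

theorem ConvexLift.transfer
    (hS : ∀ μ ν α μ', S μ ν → dstep μ α μ' → ∃ ν' ν'', wtau τ ν ν' ∧ optStep τ ν' α ν'' ∧
      S μ ν' ∧ ConvexLift S μ' ν'')
    {μ ν μ' : Distr (PE Act)} {α : Act} (h : ConvexLift S μ ν) (hd : dstep μ α μ') :
    ∃ ν' ν'', wtau τ ν ν' ∧ optStep τ ν' α ν'' ∧ ConvexLift S μ ν' ∧ ConvexLift S μ' ν'' := by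
  obtain ⟨I, _, p, ms, ns, hm, hn, hmn⟩ := h
  obtain ⟨ms', hm', hd'⟩ := hm.exists_dstep hd
  have hpieces : ∀ i, ∃ n' n'', wtau τ (ns i) n' ∧
      (p i ≠ 0 → optStep τ n' α n'' ∧ S (ms i) n' ∧ ConvexLift S (ms' i) n'') := by
    intro i
    by_cases hi : p i = 0
    · exact ⟨ns i, ns i, .refl, fun h => absurd hi h⟩
    · obtain ⟨n', n'', h1, h2, h3, h4⟩ := hS _ _ _ _ (hmn i hi) (hd' i hi)
      exact ⟨n', n'', h1, fun _ => ⟨h2, h3, h4⟩⟩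
  choose n' n'' hwt hn' using hpieces
  obtain ⟨ν', hν'⟩ := exists_isCombo hm.1 hm.2.1 n'
  obtain ⟨ν'', hν''⟩ := exists_isCombo hm.1 hm.2.1 n''
  exact ⟨ν', ν'', wtau_combo hn hν' hwt, optStep_combo hν' hν'' fun i hi => (hn' i hi).1,
    ⟨I, inferInstance, p, ms, n', hm, hν', fun i hi => (hn' i hi).2.1⟩,
    ConvexLift.bind ⟨I, inferInstance, p, ms', n'', hm', hν'', fun i hi => (hn' i hi).2.2⟩⟩

theorem isBranchingBisim_convexLift (hsymm : ∀ μ ν, S μ ν → S ν μ) (hrefl : ∀ μ, S μ μ)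
    (hdec : WeaklyDecomposable τ S)
    (htrans : ∀ μ ν α μ', S μ ν → dstep μ α μ' → ∃ ν' ν'', wtau τ ν ν' ∧ optStep τ ν' α ν'' ∧
      S μ ν' ∧ ConvexLift S μ' ν'') :
    IsBranchingBisim τ (ConvexLift S) :=
  ⟨fun _ _ h => h.symm hsymm, hdec.convexLift hrefl, fun _ _ _ _ => ConvexLift.transfer htrans⟩

end Bisimulation

def Swap {X : Type} (a b : X) (μ ν : Distr X) : Prop :=
  μ = Distr.dirac a ∧ ν = Distr.dirac b ∨ μ = Distr.dirac b ∧ ν = Distr.dirac a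

theorem Swap.symm {X : Type} {a b : X} {μ ν : Distr X} (h : Swap a b μ ν) : Swap a b ν μ :=
  Or.imp And.symm And.symm (Or.symm h)

theorem Swap.exists_isCombo {X I : Type} [Fintype I] {a b : X} {p : I → ℝ}
    {μs : I → Distr X} {μ ν : Distr X} (h : Swap a b μ ν) (hc : IsCombo p μs μ) :
    ∃ νs : I → Distr X, IsCombo p νs ν ∧ ∀ i, μs i = νs i ∨ Swap a b (μs i) (νs i) := by
  obtain ⟨c, rfl⟩ : ∃ c, μ = Distr.dirac c := h.elim (fun h => ⟨a, h.1⟩) fun h => ⟨b, h.1⟩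
  refine ⟨fun i => if p i = 0 then μs i else ν,
    (isCombo_const hc.1 hc.2.1 ν).congr fun i hi => by simp [hi], fun i => ?_⟩
  by_cases hi : p i = 0
  · simp [hi]
  · simp only [hi, if_false, hc.eq_dirac hi]
    exact Or.inr h

section Sq

variable {τ}

theorem sq.plus {E F : PE Act} (h : sq τ E (.dirac F)) : sq τ (.plus E F) (.dirac F) := by
  intro α μ hstep
  cases hstep with
  | left hE => exact h α μ hE
  | right hF => exact ⟨μ, Or.inl (dstep_of_pstep hF), bb_refl μ⟩

theorem sq_dirac_plus (E F : PE Act) : sq τ F (.dirac (.plus E F)) :=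
  fun _ μ hF => ⟨μ, Or.inl (dstep_of_pstep (pstep.right hF)), bb_refl μ⟩

theorem sq.exists_optStep {a b : PE Act} (h : sq τ a (.dirac b)) {α : Act}
    {μ' : Distr (PE Act)} (hd : dstep (Distr.dirac a) α μ') :
    ∃ ν'', optStep τ (Distr.dirac b) α ν'' ∧ ConvexLift (bb τ) μ' ν'' := by
  obtain ⟨J, _, q, Es, ms, hE, hms, hst⟩ := hd
  have hmatch : ∀ j, ∃ ν, q j ≠ 0 → optStep τ (Distr.dirac b) α ν ∧ bb τ (ms j) ν := by
    intro j
    by_cases hj : q j = 0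
    · exact ⟨ms j, fun h => absurd hj h⟩
    · obtain ⟨ν, h1, h2⟩ := h α (ms j) (hE.eq_of_dirac hj ▸ hst j)
      exact ⟨ν, fun _ => ⟨h1, h2⟩⟩
  choose νs hνs using hmatch
  obtain ⟨ν'', hν''⟩ := exists_isCombo hE.1 hE.2.1 νs
  exact ⟨ν'', optStep_combo (isCombo_const hE.1 hE.2.1 _) hν'' fun j hj => (hνs j hj).1,
    ⟨J, inferInstance, q, ms, νs, hms, hν'', fun j hj => (hνs j hj).2⟩⟩

theorem isBranchingBisim_convexLift_swap {a b : PE Act} (hab : sq τ a (.dirac b))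
    (hba : sq τ b (.dirac a)) :
    IsBranchingBisim τ (ConvexLift fun μ ν => bb τ μ ν ∨ Swap a b μ ν) := by
  refine isBranchingBisim_convexLift (fun _ _ h => h.imp bb_symm Swap.symm)
    (fun μ => Or.inl (bb_refl μ)) ?_ ?_
  · intro I _ p μs μ ν h hc
    rcases h with h | h
    · obtain ⟨ν', νs, h1, h2, h3, h4⟩ := isBranchingBisim_bb.2.1 I _ p μs μ ν h hc
      exact ⟨ν', νs, h1, Or.inl h2, h3, fun i => Or.inl (h4 i)⟩
    · obtain ⟨νs, h3, h4⟩ := h.exists_isCombo hc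
      exact ⟨ν, νs, .refl, Or.inr h, h3,
        fun i => (h4 i).elim (fun h => Or.inl (h ▸ bb_refl _)) Or.inr⟩
  · intro μ ν α μ' h hd
    rcases h with h | h
    · obtain ⟨ν', ν'', h1, h2, h3, h4⟩ := isBranchingBisim_bb.2.2 μ ν α μ' h hd
      exact ⟨ν', ν'', h1, h2, Or.inl h3, .of (Or.inl h4)⟩
    · obtain ⟨ν'', h1, h2⟩ : ∃ ν'', optStep τ ν α ν'' ∧ ConvexLift (bb τ) μ' ν'' := by
        rcases h with ⟨rfl, rfl⟩ | ⟨rfl, rfl⟩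
        exacts [hab.exists_optStep hd, hba.exists_optStep hd]
      exact ⟨ν, ν'', .refl, h1, Or.inr h, h2.mono fun _ _ => Or.inl⟩

end Sq

section Rooted

variable {τ}

theorem dstep_dirac_pre {α α' : Act} {P : PP Act} {μ' : Distr (PE Act)}
    (hd : dstep (Distr.dirac (.pre α P)) α' μ') : α' = α ∧ μ' = den P := by
  obtain ⟨J, _, q, Es, ms, hE, hms, hst⟩ := hd
  have hpre : ∀ j, q j ≠ 0 → α' = α ∧ ms j = den P := fun j hj => by
    have h := hst j
    rw [hE.eq_of_dirac hj] at h
    generalize ms j = m at h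
    cases h
    exact ⟨rfl, rfl⟩
  obtain ⟨j, hj⟩ : ∃ j, q j ≠ 0 := by
    by_contra! h
    simpa [h] using hE.2.1
  exact ⟨(hpre j hj).1, (hms.congr fun j hj => (hpre j hj).2).eq_of_const⟩

theorem rbb_pre_of_bb_den {α : Act} {P P' : PP Act} (h : bb τ (den P) (den P')) :
    rbb τ (Distr.dirac (.pre α P)) (Distr.dirac (.pre α P')) := by
  refine ⟨fun μ ν => μ = ν ∨ Swap (.pre α P) (.pre α P') μ ν,
    ⟨?_, ?_, ?_⟩, Or.inr (Or.inl ⟨rfl, rfl⟩)⟩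
  · rintro _ _ (rfl | hR)
    exacts [Or.inl rfl, Or.inr hR.symm]
  · intro I _ p μs μ ν hR hc
    rcases hR with rfl | hR
    · exact ⟨μs, hc, fun i => Or.inl rfl⟩
    · exact hR.exists_isCombo hc
  · intro μ ν β μ' hR hd
    rcases hR with rfl | ⟨rfl, rfl⟩ | ⟨rfl, rfl⟩
    · exact ⟨μ', hd, bb_refl μ'⟩
    · obtain ⟨rfl, rfl⟩ := dstep_dirac_pre hd
      exact ⟨den P', dstep_of_pstep (.pre _ P'), h⟩
    · obtain ⟨rfl, rfl⟩ := dstep_dirac_pre hd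
      exact ⟨den P, dstep_of_pstep (.pre _ P), bb_symm h⟩

end Rooted

/-- Soundness of axiom G: if `E ⊑ ∂(F)` then `E + F ≈_b F`, and hence
`α.(∂(E+F) ⊕_r Q) ≈_rb α.(∂(F) ⊕_r Q)`. -/
theorem statement16 {Act : Type} (τ : Act) (E F : PE Act)
    (h : sq τ E (.dirac F)) :
    bb τ (Distr.dirac (.plus E F)) (Distr.dirac F) ∧
    ∀ (α : Act) (Q : PP Act) (r : ℝ) (h0 : 0 < r) (h1 : r < 1),
      rbb τ (Distr.dirac (.pre α (.pchoice (.dirac (.plus E F)) r h0 h1 Q)))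
            (Distr.dirac (.pre α (.pchoice (.dirac F) r h0 h1 Q))) := by
  have hR := isBranchingBisim_convexLift_swap h.plus (sq_dirac_plus E F)
  have hswap : Swap (.plus E F) F (Distr.dirac (.plus E F)) (Distr.dirac F) := Or.inl ⟨rfl, rfl⟩
  refine ⟨⟨_, hR, .of (Or.inr hswap)⟩, fun α Q r h0 h1 => rbb_pre_of_bb_den ⟨_, hR, ?_⟩⟩
  exact .of_isMix (Or.inr hswap) (Or.inl (bb_refl (den Q))) h0.le h1.le
    (fun _ => rfl) (fun _ => rfl)

end PBB
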